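/- arXiv:2207.14680 — 7 statements merged into one kernel-verified Lean document; each statement's English description precedes it below -/
import Mathlib

section
/- Fix M₀ > 0 and γ > 0, and set R₀ = √(γ/(π M₀)). Let g : (0,∞) → ℝ be a continuous, non-increasing, non-negative function such that s ↦ s·g(s) is locally integrable on [0,∞). Then for every x ∈ ℝ², the supremum of ∫_{ℝ²} g(|x−y|) f(y) dy over all essentially bounded compactly supported measurable functions f : ℝ² → ℝ satisfying 0 ≤ f ≤ M₀ almost everywhere and ∫_{ℝ²} f = γ, equals 2π M₀ ∫₀^{R₀} s·g(s) ds; moreover the supremum is attained at f* = M₀·1_{B(x,R₀)}, the function equal to M₀ on the open Euclidean ball B(x,R₀) of center x and radius R₀ and equal to 0 elsewhere. -/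
/-!
Put `f* = M₀ 1_{B(x,R₀)}` and `c = g R₀`. Since `g` is non-increasing,
`(g |x - y| - c) (f* y - f y) ≥ 0` everywhere off `x`: inside the ball `f ≤ M₀ = f*` and
`g ≥ c`, outside it `f ≥ 0 = f*` and `g ≤ c`. Integrating, and using `∫ f = γ = ∫ f*`, gives
`∫ g f ≤ ∫ g f*`; the right side is computed in polar coordinates.
-/

open MeasureTheory Real Metric Set

lemma HasCompactSupport.integrable_of_ae_norm_le {X E : Type*} [TopologicalSpace X]
    [MeasurableSpace X] {μ : Measure X} [IsFiniteMeasureOnCompacts μ] [NormedAddCommGroup E]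
    {f : X → E} (hsupp : HasCompactSupport f) (hf : AEStronglyMeasurable f μ) {C : ℝ}
    (hC : ∀ᵐ y ∂μ, ‖f y‖ ≤ C) : Integrable f μ := by
  rw [← integrableOn_iff_integrable_of_support_subset (subset_tsupport f)]
  exact Measure.integrableOn_of_bounded hsupp.measure_lt_top.ne hf (ae_restrict_of_ae hC)

/-- The bathtub principle. -/
theorem integral_mul_le_integral_mul_of_integral_eq {α : Type*} [MeasurableSpace α]
    {μ : Measure α} {G f f' : α → ℝ} (c : ℝ) (hf : Integrable f μ) (hf' : Integrable f' μ)
    (hGf' : Integrable (fun y => G y * f' y) μ)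
    (hGf : AEStronglyMeasurable (fun y => G y * f y) μ) (hGf_nonneg : ∀ᵐ y ∂μ, 0 ≤ G y * f y)
    (hmass : ∫ y, f y ∂μ = ∫ y, f' y ∂μ)
    (hsign : ∀ᵐ y ∂μ, 0 ≤ (G y - c) * (f' y - f y)) :
    ∫ y, G y * f y ∂μ ≤ ∫ y, G y * f' y ∂μ := by
  have hbound : ∀ᵐ y ∂μ, G y * f y ≤ G y * f' y + c * (f y - f' y) := by
    filter_upwards [hsign] with y hy
    linarith
  have hbound_int : Integrable (fun y => G y * f' y + c * (f y - f' y)) μ :=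
    hGf'.add ((hf.sub hf').const_mul c)
  have hGf_int : Integrable (fun y => G y * f y) μ := by
    refine hbound_int.mono' hGf ?_
    filter_upwards [hbound, hGf_nonneg] with y hy hy₀
    rwa [Real.norm_of_nonneg hy₀]
  calc ∫ y, G y * f y ∂μ ≤ ∫ y, G y * f' y + c * (f y - f' y) ∂μ :=
        integral_mono_ae hGf_int hbound_int hbound
    _ = ∫ y, G y * f' y ∂μ := by
      have hcf : Integrable (fun y => c * (f y - f' y)) μ := (hf.sub hf').const_mul c
      rw [integral_add hGf' hcf, integral_const_mul, integral_sub hf hf', hmass, sub_self,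
        mul_zero, add_zero]

lemma AntitoneOn.sub_mul_indicator_ball_sub_nonneg {X : Type*} [MetricSpace X] {g : ℝ → ℝ}
    (hg : AntitoneOn g (Ioi 0)) {x y : X} (hyx : y ≠ x) {R M a : ℝ} (hR : 0 < R) (ha : 0 ≤ a)
    (haM : a ≤ M) : 0 ≤ (g (dist x y) - g R) * ((ball x R).indicator (fun _ => M) y - a) := by
  have hd : 0 < dist x y := dist_pos.2 hyx.symm
  by_cases hy : dist x y < R
  · rw [indicator_of_mem (mem_ball'.2 hy)]
    exact mul_nonneg (sub_nonneg.2 (hg hd hR hy.le)) (sub_nonneg.2 haM)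
  · rw [indicator_of_notMem (fun h => hy (mem_ball'.1 h))]
    exact mul_nonneg_of_nonpos_of_nonpos (sub_nonpos.2 (hg hR hd (not_lt.1 hy))) (by linarith)

lemma ContinuousOn.aestronglyMeasurable_comp_dist {X : Type*} [MetricSpace X] [MeasurableSpace X]
    [OpensMeasurableSpace X] (μ : Measure X) [NullSingletonClass μ] {g : ℝ → ℝ}
    (hg : ContinuousOn g (Ioi 0)) (x : X) : AEStronglyMeasurable (fun y => g (dist x y)) μ := by
  have hcont : ContinuousOn (fun y => g (dist x y)) {x}ᶜ :=
    hg.comp (continuous_const.dist continuous_id).continuousOn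
      fun y hy => dist_pos.2 (Ne.symm hy)
  simpa using hcont.aestronglyMeasurable (μ := μ) (measurableSet_singleton x).compl

section Radial

variable {E F : Type*} [NormedAddCommGroup E] [NormedSpace ℝ E] [MeasurableSpace E] [BorelSpace E]
  [FiniteDimensional ℝ E] [Nontrivial E] [NormedAddCommGroup F] [NormedSpace ℝ F]
  (μ : Measure E) [μ.IsAddHaarMeasure]

lemma integrableOn_ball_fun_dist_iff (x : E) {g : ℝ → F} {R : ℝ} :
    IntegrableOn (fun y => g (dist x y)) (ball x R) μ ↔
      IntegrableOn (fun s => s ^ (Module.finrank ℝ E - 1) • g s) (Ioo 0 R) := by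
  rw [← integrableOn_fun_norm_addHaar μ,
    ← (measurePreserving_add_right μ x).integrableOn_comp_preimage (measurableEmbedding_addRight x)]
  simp [Function.comp_def, dist_eq_norm]

lemma setIntegral_ball_fun_dist (x : E) (g : ℝ → F) (R : ℝ) :
    ∫ y in ball x R, g (dist x y) ∂μ = Module.finrank ℝ E • μ.real (ball 0 1) •
      ∫ s in Ioo 0 R, s ^ (Module.finrank ℝ E - 1) • g s := by
  have hball (y : E) : (ball 0 R).indicator (fun y => g ‖y‖) y = (Iio R).indicator g ‖y‖ := by
    by_cases h : ‖y‖ < R <;> simp [indicator, h]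
  have hIoi : ∀ s ∈ Ioi (0 : ℝ), s ^ (Module.finrank ℝ E - 1) • (Iio R).indicator g s =
      (Ioo 0 R).indicator (fun s => s ^ (Module.finrank ℝ E - 1) • g s) s := by
    intro s hs
    by_cases h : s < R <;> simp [indicator, h, hs.out]
  rw [← (measurePreserving_add_right μ x).setIntegral_preimage_emb (measurableEmbedding_addRight x)]
  simp only [preimage_add_right_ball, dist_add_self_right, sub_self]
  rw [← integral_indicator measurableSet_ball]
  simp only [hball]
  rw [integral_fun_norm_addHaar, setIntegral_congr_fun measurableSet_Ioi hIoi,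
    setIntegral_indicator measurableSet_Ioo, Ioi_inter_Ioo, max_self]

end Radial

namespace EuclideanSpace

lemma setIntegral_ball_fun_dist_fin_two (x : EuclideanSpace ℝ (Fin 2)) (g : ℝ → ℝ) (R : ℝ) :
    ∫ y in ball x R, g (dist x y) = 2 * π * ∫ s in Ioo 0 R, s * g s := by
  rw [setIntegral_ball_fun_dist, measureReal_def, volume_ball_fin_two]
  simp [mul_assoc, pi_pos.le]

lemma integral_indicator_ball_fin_two (x : EuclideanSpace ℝ (Fin 2)) {R : ℝ} (hR : 0 ≤ R)
    (M : ℝ) : ∫ y, (ball x R).indicator (fun _ => M) y = π * R ^ 2 * M := by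
  rw [integral_indicator_const _ measurableSet_ball, measureReal_def, volume_ball_fin_two,
    ← ENNReal.ofReal_pow hR, ← ENNReal.ofReal_mul (by positivity),
    ENNReal.toReal_ofReal (by positivity), smul_eq_mul, mul_comm (R ^ 2)]

lemma integrable_mul_indicator_ball_fin_two {g : ℝ → ℝ}
    (hg : LocallyIntegrableOn (fun s => s * g s) (Ici 0)) (x : EuclideanSpace ℝ (Fin 2))
    (R M : ℝ) : Integrable (fun y => g (dist x y) * (ball x R).indicator (fun _ => M) y) := by
  rw [funext fun y => (indicator_mul_right _ (fun y => g (dist x y)) _).symm,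
    integrable_indicator_iff measurableSet_ball]
  have hkernel : IntegrableOn (fun y => g (dist x y)) (ball x R) := by
    rw [integrableOn_ball_fun_dist_iff]
    simpa using (hg.integrableOn_compact_subset Icc_subset_Ici_self isCompact_Icc).mono_set
      (Ioo_subset_Icc_self (a := 0) (b := R))
  exact hkernel.mul_const M

end EuclideanSpace

/-- Lemma B.1 (rearrangement of the mass): among nonnegative densities bounded by `M₀`
with total mass `γ`, the integral of a radially non-increasing kernel centered at `x`
is maximized by the uniform density `M₀` on the ball `B(x, R₀)` with `π M₀ R₀² = γ`,
with maximal value `2π M₀ ∫₀^{R₀} s g(s) ds`. -/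
theorem rearrangement_of_mass
    (M₀ γ R₀ : ℝ) (hM₀ : 0 < M₀) (hγ : 0 < γ)
    (hR₀ : R₀ = Real.sqrt (γ / (π * M₀)))
    (g : ℝ → ℝ)
    (hgcont : ContinuousOn g (Set.Ioi 0))
    (hgmono : AntitoneOn g (Set.Ioi 0))
    (hgnonneg : ∀ s ∈ Set.Ioi (0:ℝ), 0 ≤ g s)
    (hgint : LocallyIntegrableOn (fun s => s * g s) (Set.Ici 0))
    (x : EuclideanSpace ℝ (Fin 2)) :
    (∀ f : EuclideanSpace ℝ (Fin 2) → ℝ,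
      Measurable f → HasCompactSupport f →
      (∀ᵐ y ∂(volume), 0 ≤ f y ∧ f y ≤ M₀) →
      (∫ y, f y) = γ →
      ∫ y, g (dist x y) * f y ≤ 2 * π * M₀ * ∫ s in Set.Ioc (0:ℝ) R₀, s * g s) ∧
    (∫ y, g (dist x y) * (Metric.ball x R₀).indicator (fun _ => M₀) y
      = 2 * π * M₀ * ∫ s in Set.Ioc (0:ℝ) R₀, s * g s) := by
  have hR₀pos : 0 < R₀ := hR₀ ▸ Real.sqrt_pos.2 (by positivity)
  have hball_mass : ∫ y, (ball x R₀).indicator (fun _ => M₀) y = γ := by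
    rw [EuclideanSpace.integral_indicator_ball_fin_two x hR₀pos.le, hR₀,
      Real.sq_sqrt (by positivity)]
    field_simp
  have hvalue : ∫ y, g (dist x y) * (ball x R₀).indicator (fun _ => M₀) y
      = 2 * π * M₀ * ∫ s in Ioc 0 R₀, s * g s := by
    rw [funext fun y => (indicator_mul_right _ (fun y => g (dist x y)) _).symm,
      integral_indicator measurableSet_ball, integral_mul_const,
      EuclideanSpace.setIntegral_ball_fun_dist_fin_two, integral_Ioc_eq_integral_Ioo]
    ring
  refine ⟨fun f hf hsupp hbound hmass => ?_, hvalue⟩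
  have hf_int : Integrable f := hsupp.integrable_of_ae_norm_le hf.aestronglyMeasurable
    (C := M₀) (by filter_upwards [hbound] with y hy; exact (Real.norm_of_nonneg hy.1).trans_le hy.2)
  rw [← hvalue]
  refine integral_mul_le_integral_mul_of_integral_eq (g R₀) hf_int ?_
    (EuclideanSpace.integrable_mul_indicator_ball_fin_two hgint x R₀ M₀)
    ((hgcont.aestronglyMeasurable_comp_dist volume x).mul hf.aestronglyMeasurable) ?_
    (hmass.trans hball_mass.symm) ?_
  · exact (integrableOn_const measure_ball_lt_top.ne).integrable_indicator measurableSet_ball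
  · filter_upwards [Measure.ae_ne volume x, hbound] with y hyx hy
    exact mul_nonneg (hgnonneg _ (dist_pos.2 hyx.symm)) hy.1
  · filter_upwards [Measure.ae_ne volume x, hbound] with y hyx hy
    exact hgmono.sub_mul_indicator_ball_sub_nonneg hyx hR₀pos hy.1 hy.2
end

section
/- Let M, γ, d > 0 and set R₀ = √(γ/(π M)); assume R₀ ≤ d. Then for every x ∈ ℝ² and every measurable function f : ℝ² → ℝ with 0 ≤ f ≤ M almost everywhere and ∫_{ℝ²} f = γ, one has ∫_{B(x,d)} ln(d/|x−y|) f(y) dy ≤ γ·(ln(d/R₀) + 1/2). -/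
/-!
Write `log (d / |x - y|) = log (d / R₀) + log (R₀ / |x - y|)`. Against `f` the first term
contributes at most `γ log (d / R₀)`. In the second, `log ≤ log⁺` and `f ≤ M` bound the
integrand by `M log⁺ (R₀ / |x - y|)` (so the extremal density is `M` on `B(x, R₀)`), and in polar
coordinates `∫ log⁺ (R₀ / |y|) dy = π R₀ ^ 2 / 2`, giving `M π R₀ ^ 2 / 2 = γ / 2`.
-/

open MeasureTheory Real Set

namespace Real

theorem mul_log_div_eq {R : ℝ} (hR : R ≠ 0) (y : ℝ) :
    y * log (R / y) = y * log R - y * log y := by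
  rcases eq_or_ne y 0 with rfl | hy
  · simp
  · rw [log_div hR hy, mul_sub]

theorem continuous_mul_log_div {R : ℝ} (hR : R ≠ 0) : Continuous fun y => y * log (R / y) := by
  simp only [mul_log_div_eq hR]
  fun_prop

theorem hasDerivAt_log_div {R y : ℝ} (hR : R ≠ 0) (hy : y ≠ 0) :
    HasDerivAt (fun y => log (R / y)) (-y⁻¹) y := by
  have := ((hasDerivAt_inv hy).const_mul R).log (mul_ne_zero hR (inv_ne_zero hy))
  simp only [← div_eq_mul_inv] at this
  convert this using 1
  field_simp

theorem posLog_div_eq_log {R y : ℝ} (hy : 0 < y) (hyR : y ≤ R) : log⁺ (R / y) = log (R / y) :=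
  posLog_eq_log (by rw [abs_of_pos (div_pos (hy.trans_le hyR) hy)]; exact (one_le_div hy).2 hyR)

theorem posLog_div_eq_zero {R y : ℝ} (hR : 0 ≤ R) (hRy : R ≤ y) : log⁺ (R / y) = 0 :=
  (posLog_eq_zero_iff _).2 <| by
    rw [abs_of_nonneg (div_nonneg hR (hR.trans hRy))]
    exact div_le_one_of_le₀ hRy (hR.trans hRy)

theorem log_div_nonneg {d s : ℝ} (hs : 0 ≤ s) (hsd : s ≤ d) : 0 ≤ log (d / s) := by
  rcases hs.eq_or_lt with rfl | hs
  · simp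
  · exact log_nonneg ((one_le_div hs).2 hsd)

theorem log_div_mul_le_log_div_mul_add_mul_posLog {d R s a M : ℝ} (hR : 0 < R) (hRd : R ≤ d)
    (hs : 0 ≤ s) (ha : 0 ≤ a) (haM : a ≤ M) :
    log (d / s) * a ≤ log (d / R) * a + M * log⁺ (R / s) := by
  rcases hs.eq_or_lt with rfl | hs
  · simpa using mul_nonneg (log_div_nonneg hR.le hRd) ha
  have hsplit : log (d / s) = log (d / R) + log (R / s) := by
    rw [← log_mul (div_pos (hR.trans_le hRd) hR).ne' (div_pos hR hs).ne',
      div_mul_div_cancel₀ hR.ne']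
  calc log (d / s) * a = log (d / R) * a + log (R / s) * a := by rw [hsplit, add_mul]
    _ ≤ log (d / R) * a + log⁺ (R / s) * M :=
      add_le_add_right (mul_le_mul (le_max_right _ _) haM ha posLog_nonneg) _
    _ = log (d / R) * a + M * log⁺ (R / s) := by rw [mul_comm M]

end Real

section OneDim

variable {R : ℝ} (k : ℕ)

theorem hasDerivAt_pow_succ_mul_log_div {y : ℝ} (hR : R ≠ 0) (hy : y ≠ 0) :
    HasDerivAt (fun y => y ^ (k + 1) / (k + 1) * log (R / y) + y ^ (k + 1) / (k + 1) ^ 2)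
      (y ^ k * log (R / y)) y := by
  have h := (((hasDerivAt_pow (k + 1) y).div_const ((k : ℝ) + 1)).mul
    (hasDerivAt_log_div hR hy)).add ((hasDerivAt_pow (k + 1) y).div_const (((k : ℝ) + 1) ^ 2))
  refine h.congr_deriv ?_
  rw [Nat.add_sub_cancel]
  push_cast
  field_simp
  ring

theorem continuous_pow_succ_mul_log_div (hR : R ≠ 0) :
    Continuous fun y : ℝ => y ^ (k + 1) / (k + 1) * log (R / y) + y ^ (k + 1) / (k + 1) ^ 2 := by
  refine ((((continuous_pow k).mul (continuous_mul_log_div hR)).div_const ((k : ℝ) + 1)).add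
    ((continuous_pow (k + 1)).div_const (((k : ℝ) + 1) ^ 2))).congr fun y => ?_
  simp only [Pi.add_apply, Pi.mul_apply]
  ring

-- For `k = 0` the integrand is unbounded near `0`; it is integrable as the nonnegative
-- derivative of a function continuous on `[0, R]`.
theorem integrableOn_pow_mul_log_div (hR : 0 < R) :
    IntegrableOn (fun y : ℝ => y ^ k * log (R / y)) (Ioc 0 R) :=
  intervalIntegral.integrableOn_deriv_of_nonneg
    (continuous_pow_succ_mul_log_div k hR.ne').continuousOn
    (fun _ hy => hasDerivAt_pow_succ_mul_log_div k hR.ne' hy.1.ne')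
    (fun _ hy => mul_nonneg (pow_nonneg hy.1.le k) (log_nonneg ((one_le_div hy.1).2 hy.2.le)))

theorem integral_pow_mul_log_div (hR : 0 < R) :
    ∫ y in Ioc 0 R, y ^ k * log (R / y) = R ^ (k + 1) / (k + 1) ^ 2 := by
  rw [← intervalIntegral.integral_of_le hR.le,
    intervalIntegral.integral_eq_sub_of_hasDerivAt_of_le hR.le
      (continuous_pow_succ_mul_log_div k hR.ne').continuousOn
      (fun _ hy => hasDerivAt_pow_succ_mul_log_div k hR.ne' hy.1.ne')
      ((intervalIntegrable_iff_integrableOn_Ioc_of_le hR.le).2 (integrableOn_pow_mul_log_div k hR))]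
  simp [div_self hR.ne']

theorem eqOn_pow_mul_posLog_div (hR : 0 ≤ R) :
    EqOn (fun y : ℝ => y ^ k * log⁺ (R / y)) ((Ioc 0 R).indicator fun y => y ^ k * log (R / y))
      (Ioi 0) := by
  intro y (hy : 0 < y)
  by_cases hyR : y ≤ R
  · simp [indicator_of_mem (show y ∈ Ioc 0 R from ⟨hy, hyR⟩), posLog_div_eq_log hy hyR]
  · simp [indicator_of_notMem (fun h : y ∈ Ioc 0 R => hyR h.2),
      posLog_div_eq_zero hR (not_le.1 hyR).le]

theorem integrableOn_pow_mul_posLog_div (hR : 0 < R) :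
    IntegrableOn (fun y : ℝ => y ^ k * log⁺ (R / y)) (Ioi 0) := by
  rw [integrableOn_congr_fun (eqOn_pow_mul_posLog_div k hR.le) measurableSet_Ioi]
  exact ((integrableOn_pow_mul_log_div k hR).integrable_indicator measurableSet_Ioc).integrableOn

theorem integral_pow_mul_posLog_div (hR : 0 < R) :
    ∫ y in Ioi 0, y ^ k * log⁺ (R / y) = R ^ (k + 1) / (k + 1) ^ 2 := by
  rw [setIntegral_congr_fun measurableSet_Ioi (eqOn_pow_mul_posLog_div k hR.le),
    setIntegral_indicator measurableSet_Ioc, inter_eq_self_of_subset_right Ioc_subset_Ioi_self,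
    integral_pow_mul_log_div k hR]

end OneDim

section Radial

open Metric Module

variable {E : Type*} [NormedAddCommGroup E] [NormedSpace ℝ E] [Nontrivial E] [FiniteDimensional ℝ E]
  [MeasurableSpace E] [BorelSpace E] (μ : Measure E) [μ.IsAddHaarMeasure] {R : ℝ}

theorem integrable_posLog_div_norm (hR : 0 < R) : Integrable (fun x : E => log⁺ (R / ‖x‖)) μ :=
  (integrable_fun_norm_addHaar μ (f := fun s => log⁺ (R / s))).2 <| by
    simpa only [smul_eq_mul] using integrableOn_pow_mul_posLog_div _ hR

theorem integral_posLog_div_norm (hR : 0 < R) :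
    ∫ x, log⁺ (R / ‖x‖) ∂μ = μ.real (ball 0 1) * R ^ finrank ℝ E / finrank ℝ E := by
  have hn : 1 ≤ finrank ℝ E := finrank_pos
  rw [integral_fun_norm_addHaar μ fun s => log⁺ (R / s)]
  simp only [smul_eq_mul, nsmul_eq_mul]
  rw [integral_pow_mul_posLog_div _ hR, Nat.sub_add_cancel hn, Nat.cast_sub hn, Nat.cast_one,
    sub_add_cancel]
  have : (finrank ℝ E : ℝ) ≠ 0 := by positivity
  field_simp

theorem integrable_posLog_div_dist (hR : 0 < R) (x : E) :
    Integrable (fun y => log⁺ (R / dist x y)) μ := by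
  simpa only [dist_comm x, dist_eq_norm] using (integrable_posLog_div_norm μ hR).comp_sub_right x

theorem integral_posLog_div_dist (hR : 0 < R) (x : E) :
    ∫ y, log⁺ (R / dist x y) ∂μ = μ.real (ball 0 1) * R ^ finrank ℝ E / finrank ℝ E := by
  simp only [dist_comm x, dist_eq_norm]
  rw [integral_sub_right_eq_self (fun y => log⁺ (R / ‖y‖)) x, integral_posLog_div_norm μ hR]

end Radial

theorem integral_posLog_div_dist_fin_two {R : ℝ} (hR : 0 < R) (x : EuclideanSpace ℝ (Fin 2)) :
    ∫ y, log⁺ (R / dist x y) = π * R ^ 2 / 2 := by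
  rw [integral_posLog_div_dist volume hR x]
  simp [Measure.real, pi_nonneg]

theorem log_potential_bound_general
    (M γ d R₀ : ℝ) (hM : 0 < M) (hγ : 0 < γ)
    (hR₀ : R₀ = Real.sqrt (γ / (π * M))) (hR₀d : R₀ ≤ d)
    (x : EuclideanSpace ℝ (Fin 2))
    (f : EuclideanSpace ℝ (Fin 2) → ℝ)
    (hfbound : ∀ᵐ y ∂(volume), 0 ≤ f y ∧ f y ≤ M)
    (hfmass : (∫ y, f y) = γ) :
    ∫ y in Metric.ball x d, Real.log (d / dist x y) * f y
      ≤ γ * (Real.log (d / R₀) + 1 / 2) := by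
  have hR₀pos : 0 < R₀ := hR₀ ▸ sqrt_pos.2 (by positivity)
  have hmass : π * M * R₀ ^ 2 = γ := by
    rw [hR₀, sq_sqrt (by positivity)]
    field_simp
  have hf : Integrable f := .of_integral_ne_zero (hfmass ▸ hγ.ne')
  have hK := (integrable_posLog_div_dist volume hR₀pos x).const_mul M
  set g := fun y => log (d / R₀) * f y + M * log⁺ (R₀ / dist x y)
  have hg : Integrable g := (hf.const_mul _).add hK
  have hg_nonneg : 0 ≤ᵐ[volume] g := hfbound.mono fun y hy =>
    add_nonneg (mul_nonneg (log_div_nonneg hR₀pos.le hR₀d) hy.1) (mul_nonneg hM.le posLog_nonneg)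
  calc ∫ y in Metric.ball x d, log (d / dist x y) * f y
      ≤ ∫ y in Metric.ball x d, g y := by
        refine integral_mono_of_nonneg ?_ hg.integrableOn ?_
        · filter_upwards [ae_restrict_mem Metric.isOpen_ball.measurableSet,
            ae_restrict_of_ae hfbound] with y hy hfy
          exact mul_nonneg (log_div_nonneg dist_nonneg (Metric.mem_ball'.1 hy).le) hfy.1
        · exact ae_restrict_of_ae <| hfbound.mono fun y hy =>
            log_div_mul_le_log_div_mul_add_mul_posLog hR₀pos hR₀d dist_nonneg hy.1 hy.2
    _ ≤ ∫ y, g y := setIntegral_le_integral hg hg_nonneg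
    _ = log (d / R₀) * γ + M * (π * R₀ ^ 2 / 2) := by
        rw [integral_add (hf.const_mul _) hK, integral_const_mul, integral_const_mul, hfmass,
          integral_posLog_div_dist_fin_two hR₀pos x]
    _ = γ * (log (d / R₀) + 1 / 2) := by linear_combination hmass / 2

/-- Logarithmic-potential bound obtained from the rearrangement lemma with kernel
`g(s) = ln(d/s) 1_{s ≤ d}`. -/
theorem log_potential_bound
    (M γ d R₀ : ℝ) (hM : 0 < M) (hγ : 0 < γ) (hd : 0 < d)
    (hR₀ : R₀ = Real.sqrt (γ / (π * M))) (hR₀d : R₀ ≤ d)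
    (x : EuclideanSpace ℝ (Fin 2))
    (f : EuclideanSpace ℝ (Fin 2) → ℝ)
    (hfmeas : Measurable f)
    (hfbound : ∀ᵐ y ∂(volume), 0 ≤ f y ∧ f y ≤ M)
    (hfmass : (∫ y, f y) = γ) :
    ∫ y in Metric.ball x d, Real.log (d / dist x y) * f y
      ≤ γ * (Real.log (d / R₀) + 1 / 2) :=
  log_potential_bound_general M γ d R₀ hM hγ hR₀ hR₀d x f hfbound hfmass
end

section
/- Let Ω ⊂ ℝ² be a nonempty bounded open set, and let b be a real-valued function that is continuous on the closure of Ω, twice continuously differentiable on Ω, and strictly positive on Ω. Let z⁰ ∈ Ω and suppose that the connected component C of the level set {x ∈ closure(Ω) : b(x) = b(z⁰)} containing z⁰ is disjoint from the boundary ∂Ω. Then for every λ ∈ ℝ there exists a unique function z : [0,∞) → Ω with z(0) = z⁰ that is differentiable and satisfies z'(t) = −λ·∇⊥b(z(t))/b(z(t)) for all t ≥ 0; moreover z(t) ∈ C, and in particular b(z(t)) = b(z⁰), for all t ≥ 0. -/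
/-!
The level set `K = {x ∈ closure Ω | b x = b z⁰}` is compact. Since the component of `z⁰` in `K`
misses `∂Ω`, a clopen piece of `K` containing `z⁰` lies in `Ω`, so there is a compact `N ⊆ Ω`
with `z⁰ ∈ N` and `N ∩ K ⊆ interior N`. The function `b` is a first integral of
`F = -λ ∇⊥b / b`, so a solution starting at `z⁰` stays in `K` while it is in `N`, and it cannot
reach `∂N`, which misses `K`. Cutting `F` off outside `N` gives a globally Lipschitz bounded
field `G`, whose global solution is therefore trapped in `N`, where `G = F`. Every solution of
`ż = F z` is trapped in the same way, hence also solves `ż = G z` and coincides with it.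
-/

open Set Topology
open scoped NNReal Manifold ContDiff

section Separation

variable {X : Type*} [TopologicalSpace X] [T2Space X]

theorem exists_isClopen_mem_disjoint_of_disjoint_connectedComponent [CompactSpace X]
    {x : X} {B : Set X} (hB : IsClosed B) (h : Disjoint (connectedComponent x) B) :
    ∃ V : Set X, IsClopen V ∧ x ∈ V ∧ Disjoint V B := by
  have : Nonempty {V : Set X // IsClopen V ∧ x ∈ V} := ⟨⟨univ, isClopen_univ, mem_univ x⟩⟩
  obtain ⟨V, hV⟩ := hB.isCompact.elim_directed_family_closed
    (fun V : {V : Set X // IsClopen V ∧ x ∈ V} => (V : Set X)) (fun V => V.2.1.1)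
    (by rw [← connectedComponent_eq_iInter_isClopen, ← disjoint_iff_inter_eq_empty]; exact h.symm)
    (fun V W => ⟨⟨V.1 ∩ W.1, V.2.1.inter W.2.1, V.2.2, W.2.2⟩, inter_subset_left,
      inter_subset_right⟩)
  exact ⟨V, V.2.1, V.2.2, (disjoint_iff_inter_eq_empty.2 hV).symm⟩

theorem IsCompact.exists_isCompact_diff_disjoint_of_disjoint_connectedComponentIn
    {K B : Set X} {x : X} (hK : IsCompact K) (hx : x ∈ K) (hB : IsClosed B)
    (h : Disjoint (connectedComponentIn K x) B) :
    ∃ V ⊆ K, x ∈ V ∧ IsCompact V ∧ IsCompact (K \ V) ∧ Disjoint V B := by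
  have : CompactSpace K := isCompact_iff_compactSpace.mp hK
  rw [connectedComponentIn_eq_image hx, disjoint_image_left] at h
  obtain ⟨V, hV, hxV, hVB⟩ :=
    exists_isClopen_mem_disjoint_of_disjoint_connectedComponent (hB.preimage continuous_subtype_val) h
  refine ⟨(↑) '' V, Subtype.coe_image_subset K V, ⟨_, hxV, rfl⟩,
    hV.isClosed.isCompact.image continuous_subtype_val, ?_, disjoint_image_left.2 hVB⟩
  rw [← Set.image_val_compl]
  exact hV.compl.isClosed.isCompact.image continuous_subtype_val

theorem IsCompact.exists_isCompact_inter_subset_interior [LocallyCompactSpace X]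
    {K Ω : Set X} {x : X} (hK : IsCompact K) (hx : x ∈ K) (hKΩ : K ⊆ closure Ω) (hΩ : IsOpen Ω)
    (h : Disjoint (connectedComponentIn K x) (frontier Ω)) :
    ∃ N, IsCompact N ∧ N ⊆ Ω ∧ x ∈ N ∧ N ∩ K ⊆ interior N := by
  obtain ⟨V, hVK, hxV, hV, hKV, hVΩ⟩ :=
    hK.exists_isCompact_diff_disjoint_of_disjoint_connectedComponentIn hx isClosed_frontier h
  have hVΩ' : V ⊆ Ω := fun y hy => by
    by_contra hyΩ
    exact disjoint_left.1 hVΩ hy ⟨hKΩ (hVK hy), by rwa [hΩ.interior_eq]⟩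
  obtain ⟨N, hN, hVN, hNΩ⟩ := exists_compact_between hV (hΩ.sdiff hKV.isClosed)
    fun y hy => ⟨hVΩ' hy, fun h => h.2 hy⟩
  refine ⟨N, hN, fun y hy => (hNΩ hy).1, interior_subset (hVN hxV), fun y hy => hVN ?_⟩
  by_contra hyV
  exact (hNΩ hy.1).2 ⟨hy.2, hyV⟩

end Separation

theorem ContDiffOn.contDiff_smul_of_tsupport_subset {𝕜 E E' : Type*} [NontriviallyNormedField 𝕜]
    [NormedAddCommGroup E] [NormedSpace 𝕜 E] [NormedAddCommGroup E'] [NormedSpace 𝕜 E']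
    {φ : E → 𝕜} {F : E → E'} {U : Set E}
    {n : WithTop ℕ∞} (hU : IsOpen U) (hφ : ContDiff 𝕜 n φ) (hF : ContDiffOn 𝕜 n F U)
    (hsupp : tsupport φ ⊆ U) : ContDiff 𝕜 n (fun x => φ x • F x) := by
  refine contDiff_iff_contDiffAt.2 fun x => ?_
  by_cases hx : x ∈ U
  · exact hφ.contDiffAt.smul (hF.contDiffAt (hU.mem_nhds hx))
  · refine contDiffAt_const (c := (0 : E')).congr_of_eventuallyEq ?_
    filter_upwards [notMem_tsupport_iff_eventuallyEq.1 fun h => hx (hsupp h)] with y hy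
    simp [hy]

theorem exists_contDiff_eqOn_one_tsupport_subset {E : Type*} [NormedAddCommGroup E]
    [NormedSpace ℝ E] [FiniteDimensional ℝ E] {N U : Set E} (hN : IsCompact N) (hU : IsOpen U)
    (hNU : N ⊆ U) :
    ∃ φ : E → ℝ, ContDiff ℝ ∞ φ ∧ EqOn φ 1 N ∧ HasCompactSupport φ ∧ tsupport φ ⊆ U := by
  obtain ⟨L, hL, hNL, hLU⟩ := exists_compact_between hN hU hNU
  obtain ⟨φ, hφ0, hφ1, -⟩ := exists_contMDiffMap_zero_one_of_isClosed 𝓘(ℝ, E) (n := ⊤)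
    isOpen_interior.isClosed_compl hN.isClosed (disjoint_compl_left_iff_subset.2 hNL)
  have hsupp : tsupport φ ⊆ L :=
    closure_minimal (fun x hx => interior_subset (by_contra fun h => hx (hφ0 h))) hL.isClosed
  exact ⟨φ, contMDiff_iff_contDiff.1 φ.contMDiff, hφ1,
    hL.of_isClosed_subset (isClosed_tsupport _) hsupp, hsupp.trans hLU⟩

theorem ContDiffOn.exists_lipschitzWith_bounded_eqOn {E E' : Type*} [NormedAddCommGroup E]
    [NormedSpace ℝ E] [FiniteDimensional ℝ E] [NormedAddCommGroup E'] [NormedSpace ℝ E']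
    {f : E → E'} {U N : Set E} (hf : ContDiffOn ℝ 1 f U) (hU : IsOpen U) (hN : IsCompact N)
    (hNU : N ⊆ U) :
    ∃ (g : E → E') (K M : ℝ≥0), LipschitzWith K g ∧ (∀ x, ‖g x‖ ≤ M) ∧ EqOn g f N ∧
      ∀ x, ∃ c : ℝ, g x = c • f x := by
  obtain ⟨φ, hφ, hφN, hφsupp, hφU⟩ := exists_contDiff_eqOn_one_tsupport_subset hN hU hNU
  have hg : ContDiff ℝ 1 (φ • f) :=
    hf.contDiff_smul_of_tsupport_subset hU (hφ.of_le (by norm_num)) hφU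
  obtain ⟨K, hK⟩ := hg.lipschitzWith_of_hasCompactSupport hφsupp.smul_right one_ne_zero
  obtain ⟨M, hM⟩ := hφsupp.smul_right.exists_bound_of_continuous hg.continuous
  exact ⟨φ • f, K, M.toNNReal, hK, fun x => (hM x).trans (Real.le_coe_toNNReal M),
    fun x hx => by simp [hφN hx], fun x => ⟨φ x, rfl⟩⟩

section ODE

variable {E : Type*} [NormedAddCommGroup E] [NormedSpace ℝ E] {G : E → E} {K : ℝ≥0}

theorem eqOn_Icc_of_hasDerivWithinAt_of_lipschitzWith (hG : LipschitzWith K G) {f g : ℝ → E}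
    {a T : ℝ} (hf : ∀ t ∈ Icc a T, HasDerivWithinAt f (G (f t)) (Icc a T) t)
    (hg : ∀ t ∈ Icc a T, HasDerivWithinAt g (G (g t)) (Icc a T) t) (ha : f a = g a) :
    EqOn f g (Icc a T) :=
  ODE_solution_unique (v := fun _ => G) (fun _ => hG) (fun t ht => (hf t ht).continuousWithinAt)
    (fun t ht => (hf t (Ico_subset_Icc_self ht)).mono_of_mem_nhdsWithin (Icc_mem_nhdsGE_of_mem ht))
    (fun t ht => (hg t ht).continuousWithinAt)
    (fun t ht => (hg t (Ico_subset_Icc_self ht)).mono_of_mem_nhdsWithin (Icc_mem_nhdsGE_of_mem ht))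
    ha

theorem eqOn_Ici_of_hasDerivWithinAt_of_lipschitzWith (hG : LipschitzWith K G) {f g : ℝ → E}
    {a : ℝ} (hf : ∀ t ∈ Ici a, HasDerivWithinAt f (G (f t)) (Ici a) t)
    (hg : ∀ t ∈ Ici a, HasDerivWithinAt g (G (g t)) (Ici a) t) (ha : f a = g a) :
    EqOn f g (Ici a) := fun _ ht =>
  eqOn_Icc_of_hasDerivWithinAt_of_lipschitzWith hG
    (fun s hs => (hf s hs.1).mono Icc_subset_Ici_self)
    (fun s hs => (hg s hs.1).mono Icc_subset_Ici_self) ha ⟨ht, le_rfl⟩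

variable [CompleteSpace E]

theorem exists_hasDerivWithinAt_Icc_of_lipschitzWith (hG : LipschitzWith K G) {M : ℝ≥0}
    (hM : ∀ x, ‖G x‖ ≤ M) (x₀ : E) {T : ℝ} (hT : 0 ≤ T) :
    ∃ f : ℝ → E, f 0 = x₀ ∧ ∀ t ∈ Icc 0 T, HasDerivWithinAt f (G (f t)) (Icc 0 T) t :=
  (IsPicardLindelof.of_time_independent (t₀ := ⟨0, le_rfl, hT⟩) (x₀ := x₀)
    (a := ⟨M * T, by positivity⟩) (r := 0) (fun x _ => hM x) hG.lipschitzOnWith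
    (by simp [max_eq_left hT]; rfl)).exists_eq_forall_mem_Icc_hasDerivWithinAt₀

theorem exists_hasDerivWithinAt_Ici_of_lipschitzWith (hG : LipschitzWith K G) {M : ℝ≥0}
    (hM : ∀ x, ‖G x‖ ≤ M) (x₀ : E) :
    ∃ z : ℝ → E, z 0 = x₀ ∧ ∀ t ∈ Ici 0, HasDerivWithinAt z (G (z t)) (Ici 0) t := by
  choose f hf0 hf using fun n : ℕ =>
    exists_hasDerivWithinAt_Icc_of_lipschitzWith hG hM x₀ n.cast_nonneg
  have hmono : ∀ m n : ℕ, m ≤ n → EqOn (f m) (f n) (Icc 0 m) := fun m n hmn => by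
    have hmn' : (m : ℝ) ≤ n := by exact_mod_cast hmn
    exact eqOn_Icc_of_hasDerivWithinAt_of_lipschitzWith hG (hf m)
      (fun t ht => (hf n t ⟨ht.1, ht.2.trans hmn'⟩).mono (Icc_subset_Icc_right hmn'))
      ((hf0 m).trans (hf0 n).symm)
  have hagree : ∀ m n : ℕ, ∀ s : ℝ, 0 ≤ s → s ≤ m → s ≤ n → f m s = f n s := by
    intro m n s hs hsm hsn
    rcases le_total m n with h | h
    · exact hmono m n h ⟨hs, hsm⟩
    · exact (hmono n m h ⟨hs, hsn⟩).symm
  refine ⟨fun t => f (⌊t⌋₊ + 1) t, by simpa using hf0 1, fun t ht => ?_⟩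
  set n := ⌊t⌋₊ + 1
  have htn : t < n := by simpa [n] using Nat.lt_floor_add_one t
  have hnhds : Ico 0 (n : ℝ) ∈ 𝓝[Ici 0] t :=
    inter_mem_nhdsWithin _ (Iio_mem_nhds htn)
  refine ((hf n t ⟨ht, htn.le⟩).mono_of_mem_nhdsWithin
    (Filter.mem_of_superset hnhds Ico_subset_Icc_self)).congr_of_eventuallyEq ?_ rfl
  filter_upwards [hnhds] with s hs
  exact hagree _ n s hs.1 (by simpa using (Nat.lt_floor_add_one s).le) hs.2.le

end ODE

section FirstIntegral

variable {E : Type*} [NormedAddCommGroup E] [NormedSpace ℝ E] {b : E → ℝ} {u u' : ℝ → E}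

theorem eq_of_hasDerivWithinAt_of_fderiv_apply_eq_zero {t₀ t₁ : ℝ}
    (hu : ContinuousOn u (Icc t₀ t₁)) (hu' : ∀ t ∈ Ico t₀ t₁, HasDerivWithinAt u (u' t) (Ici t) t)
    (hb : ∀ t ∈ Icc t₀ t₁, DifferentiableAt ℝ b (u t))
    (h : ∀ t ∈ Ico t₀ t₁, fderiv ℝ b (u t) (u' t) = 0) :
    ∀ t ∈ Icc t₀ t₁, b (u t) = b (u t₀) :=
  constant_of_has_deriv_right_zero (f := b ∘ u)
    (fun t ht => (hb t ht).continuousAt.comp_continuousWithinAt (hu t ht))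
    (fun t ht => h t ht ▸
      (hb t (Ico_subset_Icc_self ht)).hasFDerivAt.comp_hasDerivWithinAt t (hu' t ht))

/-- Near any of its points the curve stays in `interior N`, where `b` is conserved, so it cannot
leave `N ∩ b ⁻¹' {c}`. -/
theorem mapsTo_Ici_of_fderiv_apply_eq_zero {N : Set E} {c a : ℝ} (hN : IsClosed N)
    (hb : ∀ x ∈ N, DifferentiableAt ℝ b x) (hNc : N ∩ b ⁻¹' {c} ⊆ interior N)
    (hu : ∀ t ∈ Ici a, HasDerivWithinAt u (u' t) (Ici a) t)
    (hbu : ∀ t ∈ Ici a, u t ∈ N → fderiv ℝ b (u t) (u' t) = 0)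
    (ha : u a ∈ N ∩ b ⁻¹' {c}) : MapsTo u (Ici a) (N ∩ b ⁻¹' {c}) := by
  have hcont : ContinuousOn u (Ici a) := fun t ht => (hu t ht).continuousWithinAt
  have hstep : ∀ x ∈ u ⁻¹' (N ∩ b ⁻¹' {c}) ∩ Ici a, u ⁻¹' (N ∩ b ⁻¹' {c}) ∈ 𝓝[>] x := by
    rintro x ⟨hx, hxa⟩
    have hint : u ⁻¹' interior N ∈ 𝓝[≥] x :=
      ((hcont x hxa).mono (Ici_subset_Ici.2 hxa)).preimage_mem_nhdsWithin
        (isOpen_interior.mem_nhds (hNc hx))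
    obtain ⟨d, hxd, hd⟩ := mem_nhdsGE_iff_exists_Ico_subset.1 hint
    filter_upwards [Ioo_mem_nhdsGT hxd] with y hy
    have hN' : ∀ t ∈ Icc x y, u t ∈ N := fun t ht =>
      interior_subset (hd (Icc_subset_Ico_right hy.2 ht))
    have hxy : Icc x y ⊆ Ici a := fun t ht => le_trans hxa ht.1
    have hby := eq_of_hasDerivWithinAt_of_fderiv_apply_eq_zero (hcont.mono hxy)
      (fun t ht => (hu t (hxy (Ico_subset_Icc_self ht))).mono
        (Ici_subset_Ici.2 (hxy (Ico_subset_Icc_self ht))))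
      (fun t ht => hb _ (hN' t ht))
      (fun t ht => hbu t (hxy (Ico_subset_Icc_self ht)) (hN' t (Ico_subset_Icc_self ht)))
      y ⟨hy.1.le, le_rfl⟩
    exact ⟨hN' y ⟨hy.1.le, le_rfl⟩, hby.trans hx.2⟩
  have hclosed : IsClosed (N ∩ b ⁻¹' {c}) :=
    ContinuousOn.preimage_isClosed_of_isClosed
      (fun x hx => (hb x hx).continuousAt.continuousWithinAt) hN isClosed_singleton
  intro T hT
  refine IsClosed.Icc_subset_of_forall_mem_nhdsWithin (s := u ⁻¹' (N ∩ b ⁻¹' {c})) ?_ ha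
    (fun x hx => hstep x ⟨hx.1, hx.2.1⟩) ⟨hT, le_rfl⟩
  rw [inter_comm]
  exact (hcont.mono Icc_subset_Ici_self).preimage_isClosed_of_isClosed isClosed_Icc hclosed

end FirstIntegral

noncomputable def perpGrad (b : ℝ × ℝ → ℝ) (x : ℝ × ℝ) : ℝ × ℝ :=
  (-(fderiv ℝ b x (0, 1)), fderiv ℝ b x (1, 0))

noncomputable def vortexField (lam : ℝ) (b : ℝ × ℝ → ℝ) (x : ℝ × ℝ) : ℝ × ℝ :=
  (-lam / b x) • perpGrad b x

theorem fderiv_apply_perpGrad (b : ℝ × ℝ → ℝ) (x : ℝ × ℝ) :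
    fderiv ℝ b x (perpGrad b x) = 0 := by
  have h : perpGrad b x =
      (-(fderiv ℝ b x (0, 1))) • ((1 : ℝ), (0 : ℝ)) + fderiv ℝ b x (1, 0) • ((0 : ℝ), (1 : ℝ)) := by
    simp [perpGrad]
  rw [h, map_add, map_smul, map_smul, smul_eq_mul, smul_eq_mul]
  ring

theorem fderiv_apply_vortexField (lam : ℝ) (b : ℝ × ℝ → ℝ) (x : ℝ × ℝ) :
    fderiv ℝ b x (vortexField lam b x) = 0 := by
  rw [vortexField, map_smul, fderiv_apply_perpGrad, smul_zero]

theorem contDiffOn_perpGrad {b : ℝ × ℝ → ℝ} {U : Set (ℝ × ℝ)} {n : WithTop ℕ∞}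
    (hb : ContDiffOn ℝ (n + 1) b U) (hU : IsOpen U) : ContDiffOn ℝ n (perpGrad b) U :=
  have hDb := hb.fderiv_of_isOpen hU le_rfl
  ((hDb.clm_apply contDiffOn_const).neg).prodMk (hDb.clm_apply contDiffOn_const)

theorem contDiffOn_vortexField (lam : ℝ) {b : ℝ × ℝ → ℝ} {U : Set (ℝ × ℝ)} {n : WithTop ℕ∞}
    (hb : ContDiffOn ℝ (n + 1) b U) (hU : IsOpen U) (hb0 : ∀ x ∈ U, b x ≠ 0) :
    ContDiffOn ℝ n (vortexField lam b) U :=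
  (contDiffOn_const.div (hb.of_le le_self_add) hb0).smul (contDiffOn_perpGrad hb hU)

theorem vortex_ODE_global_wellposed_general
    (Ω : Set (ℝ × ℝ)) (hΩopen : IsOpen Ω)
    (hΩbd : Bornology.IsBounded Ω)
    (b : ℝ × ℝ → ℝ)
    (hbc : ContinuousOn b (closure Ω))
    (hb2 : ContDiffOn ℝ 2 b Ω)
    (hbpos : ∀ x ∈ Ω, 0 < b x)
    (z0 : ℝ × ℝ) (hz0 : z0 ∈ Ω)
    (hC : connectedComponentIn {x ∈ closure Ω | b x = b z0} z0 ∩ frontier Ω = ∅)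
    (lam : ℝ) :
    ∃ z : ℝ → ℝ × ℝ, z 0 = z0 ∧
      (∀ t ∈ Set.Ici (0:ℝ),
        z t ∈ Ω ∧
        z t ∈ connectedComponentIn {x ∈ closure Ω | b x = b z0} z0 ∧
        b (z t) = b z0 ∧
        HasDerivWithinAt z
          ((-lam / b (z t)) • (-(fderiv ℝ b (z t) (0, 1)), fderiv ℝ b (z t) (1, 0)))
          (Set.Ici 0) t) ∧
      (∀ w : ℝ → ℝ × ℝ, w 0 = z0 →
        (∀ t ∈ Set.Ici (0:ℝ),
          w t ∈ Ω ∧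
          HasDerivWithinAt w
            ((-lam / b (w t)) • (-(fderiv ℝ b (w t) (0, 1)), fderiv ℝ b (w t) (1, 0)))
            (Set.Ici 0) t) →
        ∀ t ∈ Set.Ici (0:ℝ), w t = z t) := by
  set K := {x ∈ closure Ω | b x = b z0}
  have hK : IsCompact K := hΩbd.isCompact_closure.of_isClosed_subset
    (hbc.preimage_isClosed_of_isClosed isClosed_closure isClosed_singleton) fun x hx => hx.1
  obtain ⟨N, hN, hNΩ, hz0N, hNK⟩ := hK.exists_isCompact_inter_subset_interior
    ⟨subset_closure hz0, rfl⟩ (fun x hx => hx.1) hΩopen (disjoint_iff_inter_eq_empty.2 hC)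
  have hNc : N ∩ b ⁻¹' {b z0} ⊆ interior N := fun x hx =>
    hNK ⟨hx.1, subset_closure (hNΩ hx.1), hx.2⟩
  have hbN : ∀ x ∈ N, DifferentiableAt ℝ b x := fun x hx =>
    (hb2.differentiableOn two_ne_zero).differentiableAt (hΩopen.mem_nhds (hNΩ hx))
  obtain ⟨G, L, M, hL, hM, hGF, hG⟩ := (contDiffOn_vortexField lam hb2 hΩopen
    fun x hx => (hbpos x hx).ne').exists_lipschitzWith_bounded_eqOn hΩopen hN hNΩ
  obtain ⟨z, hz0', hz⟩ := exists_hasDerivWithinAt_Ici_of_lipschitzWith hL hM z0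
  have hzN := mapsTo_Ici_of_fderiv_apply_eq_zero hN.isClosed hbN hNc hz
    (fun t _ _ => by
      obtain ⟨c, hc⟩ := hG (z t)
      rw [hc, map_smul, fderiv_apply_vortexField, smul_zero])
    (by rw [hz0']; exact ⟨hz0N, rfl⟩)
  refine ⟨z, hz0', fun t ht => ⟨hNΩ (hzN ht).1, ?_, (hzN ht).2, (hGF (hzN ht).1 ▸ hz t ht :)⟩,
    fun w hw0 hw => ?_⟩
  · refine (isPreconnected_Ici.image z fun s hs => (hz s hs).continuousWithinAt)
      |>.subset_connectedComponentIn ⟨0, self_mem_Ici, hz0'⟩ ?_ (mem_image_of_mem z ht)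
    rintro _ ⟨s, hs, rfl⟩
    exact ⟨subset_closure (hNΩ (hzN hs).1), (hzN hs).2⟩
  · have hwN := mapsTo_Ici_of_fderiv_apply_eq_zero (u' := fun t => vortexField lam b (w t))
      hN.isClosed hbN hNc (fun t ht => (hw t ht).2) (fun t _ _ => fderiv_apply_vortexField lam b _)
      (by rw [hw0]; exact ⟨hz0N, rfl⟩)
    exact eqOn_Ici_of_hasDerivWithinAt_of_lipschitzWith hL
      (fun t ht => (hGF (hwN ht).1).symm ▸ (hw t ht).2) hz (hw0.trans hz0'.symm)

/-- Remark 1.3: global existence and uniqueness for the limiting point-vortex ODE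
`ż = -λ ∇⊥b(z)/b(z)`, `z(0) = z⁰`, when the connected component of the level set of `b`
through `z⁰` does not touch the boundary; the solution stays on that component. -/
theorem vortex_ODE_global_wellposed
    (Ω : Set (ℝ × ℝ)) (hΩopen : IsOpen Ω) (hΩne : Ω.Nonempty)
    (hΩbd : Bornology.IsBounded Ω)
    (b : ℝ × ℝ → ℝ)
    (hbc : ContinuousOn b (closure Ω))
    (hb2 : ContDiffOn ℝ 2 b Ω)
    (hbpos : ∀ x ∈ Ω, 0 < b x)
    (z0 : ℝ × ℝ) (hz0 : z0 ∈ Ω)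
    (hC : connectedComponentIn {x ∈ closure Ω | b x = b z0} z0 ∩ frontier Ω = ∅)
    (lam : ℝ) :
    ∃ z : ℝ → ℝ × ℝ, z 0 = z0 ∧
      (∀ t ∈ Set.Ici (0:ℝ),
        z t ∈ Ω ∧
        z t ∈ connectedComponentIn {x ∈ closure Ω | b x = b z0} z0 ∧
        b (z t) = b z0 ∧
        HasDerivWithinAt z
          ((-lam / b (z t)) • (-(fderiv ℝ b (z t) (0, 1)), fderiv ℝ b (z t) (1, 0)))
          (Set.Ici 0) t) ∧
      (∀ w : ℝ → ℝ × ℝ, w 0 = z0 →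
        (∀ t ∈ Set.Ici (0:ℝ),
          w t ∈ Ω ∧
          HasDerivWithinAt w
            ((-lam / b (w t)) • (-(fderiv ℝ b (w t) (0, 1)), fderiv ℝ b (w t) (1, 0)))
            (Set.Ici 0) t) →
        ∀ t ∈ Set.Ici (0:ℝ), w t = z t) :=
  vortex_ODE_global_wellposed_general Ω hΩopen hΩbd b hbc hb2 hbpos z0 hz0 hC lam
end

section
/- Let K ⊂ ℝ² be compact, let b : K → ℝ be continuous, and let z₁, z₂ ∈ K. For ρ ≥ 0 and j ∈ {1,2}, let C_{ρ,j} denote the connected component containing z_j of the set {x ∈ K : |b(x) − b(z_j)| ≤ ρ}. If C_{0,1} ∩ C_{0,2} = ∅, then there exists ρ > 0 such that C_{ρ,1} ∩ C_{ρ,2} = ∅. -/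
open Set

/-- The connected component in a closed set is closed. -/
lemma isClosed_connectedComponentIn' {X : Type*} [TopologicalSpace X] {F : Set X} {x : X}
    (hF : IsClosed F) : IsClosed (connectedComponentIn F x) := by
  by_cases hx : x ∈ F
  · have h1 : closure (connectedComponentIn F x) ⊆ connectedComponentIn F x :=
      (isPreconnected_connectedComponentIn.closure).subset_connectedComponentIn
        (subset_closure (mem_connectedComponentIn hx))
        (closure_minimal (connectedComponentIn_subset F x) hF)
    exact isClosed_of_closure_subset h1
  · rw [connectedComponentIn_eq_empty hx]; exact isClosed_empty

/-- A decreasing intersection of compact preconnected sets in a normal T2 space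
is preconnected. -/
lemma isPreconnected_iInter_of_decreasing {X : Type*} [TopologicalSpace X] [T2Space X]
    [NormalSpace X] (S : ℕ → Set X) (hmono : ∀ n, S (n + 1) ⊆ S n)
    (hcomp : ∀ n, IsCompact (S n)) (hconn : ∀ n, IsPreconnected (S n)) :
    IsPreconnected (⋂ n, S n) := by
  have hScl : ∀ n, IsClosed (S n) := fun n => (hcomp n).isClosed
  have hclosed : IsClosed (⋂ n, S n) := isClosed_iInter hScl
  rw [isPreconnected_iff_subset_of_fully_disjoint_closed hclosed]
  intro a b ha hb hab hdisj
  -- separate a ∩ S 0 and b ∩ S 0 by open sets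
  have ha' : IsClosed (a ∩ S 0) := ha.inter (hScl 0)
  have hb' : IsClosed (b ∩ S 0) := hb.inter (hScl 0)
  have hdisj' : Disjoint (a ∩ S 0) (b ∩ S 0) :=
    (hdisj.mono inter_subset_left inter_subset_left)
  obtain ⟨U, V, hU, hV, haU, hbV, hUV⟩ := normal_separation ha' hb' hdisj'
  -- find n with S n ⊆ U ∪ V
  have hsub0 : (⋂ n, S n) ⊆ U ∪ V := by
    intro x hx
    have hx0 : x ∈ S 0 := (iInter_subset S 0) hx
    rcases hab hx with h | h
    · exact Or.inl (haU ⟨h, hx0⟩)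
    · exact Or.inr (hbV ⟨h, hx0⟩)
  have key : ∃ n, S n ⊆ U ∪ V := by
    by_contra hcon
    push_neg at hcon
    have hne : ∀ n, (S n \ (U ∪ V)).Nonempty := by
      intro n
      rcases not_subset.1 (hcon n) with ⟨x, hx, hx'⟩
      exact ⟨x, hx, hx'⟩
    have hmono' : ∀ n, S (n + 1) \ (U ∪ V) ⊆ S n \ (U ∪ V) :=
      fun n => diff_subset_diff_left (hmono n)
    have hcl : ∀ n, IsClosed (S n \ (U ∪ V)) :=
      fun n => (hScl n).sdiff (hU.union hV)
    have hcp : IsCompact (S 0 \ (U ∪ V)) :=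
      (hcomp 0).of_isClosed_subset (hcl 0) diff_subset
    obtain ⟨x, hx⟩ := IsCompact.nonempty_iInter_of_sequence_nonempty_isCompact_isClosed
      (fun n => S n \ (U ∪ V)) hmono' hne hcp hcl
    simp only [mem_iInter, mem_diff] at hx
    exact (hx 0).2 (hsub0 (mem_iInter.2 fun n => (hx n).1))
  obtain ⟨n, hn⟩ := key
  have hSn : (⋂ m, S m) ⊆ S n := iInter_subset S n
  by_cases hne : (S n ∩ U).Nonempty
  · have hSU : S n ⊆ U :=
      (hconn n).subset_left_of_subset_union hU hV hUV hn hne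
    left
    intro x hx
    rcases hab hx with h | h
    · exact h
    · exact absurd rfl (hUV.ne_of_mem (hSU (hSn hx)) (hbV ⟨h, (iInter_subset S 0) hx⟩))
  · have hSV : S n ⊆ V := by
      intro x hx
      rcases hn hx with h | h
      · exact absurd ⟨x, hx, h⟩ hne
      · exact h
    right
    intro x hx
    rcases hab hx with h | h
    · exact absurd rfl (hUV.ne_of_mem (haU ⟨h, (iInter_subset S 0) hx⟩) (hSV (hSn hx)))
    · exact h

/-- Remark 1.4 (separation of thickened level-set components): if the level-set
components of `b` through `z₁` and `z₂` are disjoint, then the thickened components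
remain disjoint for some small thickening `ρ > 0`. -/
theorem thickened_components_disjoint
    (K : Set (ℝ × ℝ)) (hK : IsCompact K)
    (b : ℝ × ℝ → ℝ) (hb : ContinuousOn b K)
    (z1 z2 : ℝ × ℝ) (hz1 : z1 ∈ K) (hz2 : z2 ∈ K)
    (hdisj :
      connectedComponentIn {x ∈ K | |b x - b z1| ≤ (0:ℝ)} z1 ∩
        connectedComponentIn {x ∈ K | |b x - b z2| ≤ (0:ℝ)} z2 = ∅) :
    ∃ ρ > (0:ℝ),
      connectedComponentIn {x ∈ K | |b x - b z1| ≤ ρ} z1 ∩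
        connectedComponentIn {x ∈ K | |b x - b z2| ≤ ρ} z2 = ∅ := by
  by_contra hcon
  push_neg at hcon
  -- level sets and components
  set L : ℝ × ℝ → ℝ → Set (ℝ × ℝ) := fun z ρ => {x ∈ K | |b x - b z| ≤ ρ} with hL
  set C : ℝ × ℝ → ℝ → Set (ℝ × ℝ) := fun z ρ => connectedComponentIn (L z ρ) z with hC
  have hLclosed : ∀ z ρ, IsClosed (L z ρ) := by
    intro z ρ
    have : L z ρ = K ∩ (fun x => |b x - b z|) ⁻¹' Iic ρ := by
      ext x; simp [hL, mem_preimage]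
    rw [this]
    exact ContinuousOn.preimage_isClosed_of_isClosed
      ((hb.sub continuousOn_const).abs) hK.isClosed isClosed_Iic
  have hLsubK : ∀ z ρ, L z ρ ⊆ K := fun z ρ x hx => hx.1
  have hCclosed : ∀ z ρ, IsClosed (C z ρ) := fun z ρ =>
    isClosed_connectedComponentIn' (hLclosed z ρ)
  have hCcomp : ∀ z ρ, IsCompact (C z ρ) := fun z ρ =>
    hK.of_isClosed_subset (hCclosed z ρ)
      ((connectedComponentIn_subset _ _).trans (hLsubK z ρ))
  have hCmono : ∀ z, ∀ ρ ρ' : ℝ, ρ ≤ ρ' → C z ρ ⊆ C z ρ' := by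
    intro z ρ ρ' h
    exact connectedComponentIn_mono _ (fun x hx => ⟨hx.1, hx.2.trans h⟩)
  have hmemz : ∀ z : ℝ × ℝ, z ∈ K → ∀ ρ : ℝ, 0 ≤ ρ → z ∈ C z ρ := by
    intro z hz ρ hρ
    exact mem_connectedComponentIn ⟨hz, by simpa using hρ⟩
  -- the decreasing sequences of thickened components
  set ρseq : ℕ → ℝ := fun n => ((n : ℝ) + 1)⁻¹ with hρseq
  have hρpos : ∀ n, 0 < ρseq n := fun n => by positivity
  have hρmono : ∀ n, ρseq (n + 1) ≤ ρseq n := by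
    intro n
    apply inv_anti₀ (by positivity)
    push_cast; linarith
  -- key: intersection of thickened components lies in level-0 component
  have hkey : ∀ z : ℝ × ℝ, z ∈ K → (⋂ n, C z (ρseq n)) ⊆ C z 0 := by
    intro z hz
    have hmono : ∀ n, C z (ρseq (n + 1)) ⊆ C z (ρseq n) :=
      fun n => hCmono z _ _ (hρmono n)
    have hconn : IsPreconnected (⋂ n, C z (ρseq n)) :=
      isPreconnected_iInter_of_decreasing _ hmono (fun n => hCcomp z _)
        (fun n => isPreconnected_connectedComponentIn)
    have hzmem : z ∈ ⋂ n, C z (ρseq n) :=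
      mem_iInter.2 fun n => hmemz z hz _ (hρpos n).le
    have hsubL : (⋂ n, C z (ρseq n)) ⊆ L z 0 := by
      intro x hx
      simp only [mem_iInter] at hx
      have hxK : x ∈ K := (hLsubK z _) ((connectedComponentIn_subset _ _) (hx 0))
      refine ⟨hxK, ?_⟩
      by_contra habs
      push_neg at habs
      obtain ⟨n, hn⟩ := exists_nat_one_div_lt habs
      have h1 : ρseq n < |b x - b z| := by
        rw [hρseq]
        simpa [one_div] using hn
      have h3 : |b x - b z| ≤ ρseq n :=
        ((connectedComponentIn_subset _ _) (hx n)).2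
      linarith
    exact hconn.subset_connectedComponentIn hzmem hsubL
  -- build a point in the intersection of level-0 components
  have hDnonempty : ∀ n, (C z1 (ρseq n) ∩ C z2 (ρseq n)).Nonempty := by
    intro n
    exact hcon (ρseq n) (hρpos n)
  have hDmono : ∀ n, C z1 (ρseq (n + 1)) ∩ C z2 (ρseq (n + 1)) ⊆
      C z1 (ρseq n) ∩ C z2 (ρseq n) := fun n =>
    inter_subset_inter (hCmono z1 _ _ (hρmono n)) (hCmono z2 _ _ (hρmono n))
  have hDcl : ∀ n, IsClosed (C z1 (ρseq n) ∩ C z2 (ρseq n)) :=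
    fun n => (hCclosed z1 _).inter (hCclosed z2 _)
  have hDcp : IsCompact (C z1 (ρseq 0) ∩ C z2 (ρseq 0)) :=
    (hCcomp z1 _).of_isClosed_subset (hDcl 0) inter_subset_left
  obtain ⟨x, hx⟩ := IsCompact.nonempty_iInter_of_sequence_nonempty_isCompact_isClosed
    (fun n => C z1 (ρseq n) ∩ C z2 (ρseq n)) hDmono hDnonempty hDcp hDcl
  simp only [mem_iInter, mem_inter_iff] at hx
  have hx1 : x ∈ C z1 0 := hkey z1 hz1 (mem_iInter.2 fun n => (hx n).1)
  have hx2 : x ∈ C z2 0 := hkey z2 hz2 (mem_iInter.2 fun n => (hx n).2)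
  exact absurd hdisj (nonempty_iff_ne_empty.1 ⟨x, hx1, hx2⟩)
end

section
/- Let C > 0, T > 0, and let h : [0,T] → ℝ be a differentiable function such that 0 < h(t) < 1 for all t ∈ [0,T] and |h'(t)| ≤ −C·h(t)·ln(h(t)) for all t ∈ [0,T]. Then for all t ∈ [0,T] one has h(0)^{exp(Ct)} ≤ h(t) ≤ h(0)^{exp(−Ct)}. -/
/-!
Along the trajectory, `u = log (-log h)` has derivative `h' / (h log h)`, which the hypothesis
bounds by `C` in absolute value. Hence `|u t - u 0| ≤ C t`, and exponentiating twice turns this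
into the two power bounds on `h t`.
-/

open Real Set

theorem HasDerivWithinAt.log_neg_log {f : ℝ → ℝ} {f' x : ℝ} {s : Set ℝ}
    (hf : HasDerivWithinAt f f' s x) (h0 : 0 < f x) (h1 : f x < 1) :
    HasDerivWithinAt (fun y => Real.log (-Real.log (f y))) (f' / (f x * Real.log (f x))) s x := by
  have hlog : Real.log (f x) ≠ 0 := (log_neg h0 h1).ne
  refine ((hf.log h0.ne').neg.log (neg_ne_zero.2 hlog)).congr_deriv ?_
  simp only [Pi.neg_apply]
  field_simp

theorem abs_div_mul_log_le {x y C : ℝ} (h0 : 0 < x) (h1 : x < 1)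
    (hy : |y| ≤ -C * x * log x) : |y / (x * log x)| ≤ C := by
  have hlog : log x < 0 := log_neg h0 h1
  rw [abs_div, abs_mul, abs_of_pos h0, abs_of_neg hlog,
    div_le_iff₀ (mul_pos h0 (neg_pos.2 hlog))]
  linarith

theorem rpow_exp_le_and_le_rpow_exp_neg {a b s : ℝ} (ha0 : 0 < a) (ha1 : a < 1)
    (hb0 : 0 < b) (hb1 : b < 1) (h : |log (-log b) - log (-log a)| ≤ s) :
    a ^ exp s ≤ b ∧ b ≤ a ^ exp (-s) := by
  have ha : ∀ r, a ^ exp r = exp (-exp (r + log (-log a))) := fun r => by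
    rw [rpow_def_of_pos ha0, exp_add, exp_log (neg_pos.2 (log_neg ha0 ha1))]
    ring_nf
  have hb : b = exp (-exp (log (-log b))) := by
    rw [exp_log (neg_pos.2 (log_neg hb0 hb1)), neg_neg, exp_log hb0]
  obtain ⟨hlo, hhi⟩ := abs_le.1 h
  rw [ha, ha, hb]
  constructor <;> gcongr <;> linarith

theorem log_gronwall_general
    (C T : ℝ)
    (h h' : ℝ → ℝ)
    (hderiv : ∀ t ∈ Set.Icc (0:ℝ) T, HasDerivWithinAt h (h' t) (Set.Icc 0 T) t)
    (hpos : ∀ t ∈ Set.Icc (0:ℝ) T, 0 < h t)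
    (hlt1 : ∀ t ∈ Set.Icc (0:ℝ) T, h t < 1)
    (hbound : ∀ t ∈ Set.Icc (0:ℝ) T, |h' t| ≤ -C * h t * Real.log (h t)) :
    ∀ t ∈ Set.Icc (0:ℝ) T,
      h 0 ^ Real.exp (C * t) ≤ h t ∧ h t ≤ h 0 ^ Real.exp (-C * t) := by
  intro t ht
  have h0 : (0:ℝ) ∈ Icc 0 T := ⟨le_rfl, ht.1.trans ht.2⟩
  have hlip := (convex_Icc 0 T).norm_image_sub_le_of_norm_hasDerivWithin_le
    (fun s hs => HasDerivWithinAt.log_neg_log (hderiv s hs) (hpos s hs) (hlt1 s hs))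
    (fun s hs => abs_div_mul_log_le (hpos s hs) (hlt1 s hs) (hbound s hs)) h0 ht
  rw [sub_zero, norm_eq_abs, norm_eq_abs, abs_of_nonneg ht.1] at hlip
  rw [neg_mul]
  exact rpow_exp_le_and_le_rpow_exp_neg (hpos 0 h0) (hlt1 0 h0) (hpos t ht) (hlt1 t ht) hlip

/-- Double-sided logarithmic Gronwall inequality (core of Proposition A.4):
if `|h'| ≤ -C h ln h` with `0 < h < 1`, then `h(0)^{e^{Ct}} ≤ h(t) ≤ h(0)^{e^{-Ct}}`. -/
theorem log_gronwall
    (C T : ℝ) (hC : 0 < C) (hT : 0 < T)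
    (h h' : ℝ → ℝ)
    (hderiv : ∀ t ∈ Set.Icc (0:ℝ) T, HasDerivWithinAt h (h' t) (Set.Icc 0 T) t)
    (hpos : ∀ t ∈ Set.Icc (0:ℝ) T, 0 < h t)
    (hlt1 : ∀ t ∈ Set.Icc (0:ℝ) T, h t < 1)
    (hbound : ∀ t ∈ Set.Icc (0:ℝ) T, |h' t| ≤ -C * h t * Real.log (h t)) :
    ∀ t ∈ Set.Icc (0:ℝ) T,
      h 0 ^ Real.exp (C * t) ≤ h t ∧ h t ≤ h 0 ^ Real.exp (-C * t) :=
  log_gronwall_general C T h h' hderiv hpos hlt1 hbound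
end

section
/- For all K₁, L₁, L₂, A > 0 there exists a constant C > 0, depending only on K₁, L₁, L₂ and A, with the following property. Let φ : ℝ² → ℝ be differentiable with ‖∇φ(y)‖ ≤ L₁ for all y ∈ ℝ² and ‖∇φ(y) − ∇φ(y')‖ ≤ L₂‖y − y'‖ for all y, y' ∈ ℝ², and let v : ℝ² → ℝ² satisfy ‖v(y)‖ ≤ K₁ for all y ∈ ℝ² and the log-Lipschitz estimate ‖v(y) − v(y')‖ ≤ K₁‖y − y'‖(1 + |ln‖y − y'‖|) for all y ≠ y'. Let x, p ∈ ℝ² be such that 0 < φ(x) ≤ 1/2, φ(p) = 0, v(p)·∇φ(p) = 0, and ‖x − p‖ ≤ A·φ(x). Then |v(x)·∇φ(x)| ≤ C·φ(x)·(1 − ln φ(x)). -/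
private lemma gmono_aux : MonotoneOn (fun t : ℝ => t * (1 - Real.log t)) (Set.Ioc 0 1) := by
  apply monotoneOn_of_deriv_nonneg (convex_Ioc 0 1)
  · apply ContinuousOn.mul continuousOn_id
    exact continuousOn_const.sub (Real.continuousOn_log.mono (fun x hx => ne_of_gt hx.1))
  · intro x hx
    rw [interior_Ioc] at hx
    have hd : HasDerivAt (fun t : ℝ => t * (1 - Real.log t))
        (1 * (1 - Real.log x) + x * (-x⁻¹)) x :=
      (hasDerivAt_id x).mul ((Real.hasDerivAt_log (ne_of_gt hx.1)).const_sub 1)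
    exact hd.differentiableAt.differentiableWithinAt
  · intro x hx
    rw [interior_Ioc] at hx
    have hd : HasDerivAt (fun t : ℝ => t * (1 - Real.log t))
        (1 * (1 - Real.log x) + x * (-x⁻¹)) x :=
      (hasDerivAt_id x).mul ((Real.hasDerivAt_log (ne_of_gt hx.1)).const_sub 1)
    rw [hd.deriv]
    have hlog : Real.log x ≤ 0 := Real.log_nonpos hx.1.le hx.2.le
    have : x * (-x⁻¹) = -1 := by
      rw [mul_neg, mul_inv_cancel₀ (ne_of_gt hx.1)]
    rw [this]; linarith

private lemma fmono (a b : ℝ) (ha : 0 < a) (hab : a ≤ b) :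
    a * (1 + |Real.log a|) ≤ b * (1 + |Real.log b|) := by
  have hb : 0 < b := ha.trans_le hab
  rcases le_or_gt a 1 with h1 | h1
  · rcases le_or_gt b 1 with h2 | h2
    · rw [abs_of_nonpos (Real.log_nonpos ha.le h1), abs_of_nonpos (Real.log_nonpos hb.le h2)]
      have := gmono_aux ⟨ha, h1⟩ ⟨hb, h2⟩ hab
      simp only at this
      linarith
    · have h3 : a * (1 - Real.log a) ≤ 1 := by
        have := gmono_aux ⟨ha, h1⟩ ⟨one_pos, le_refl 1⟩ h1
        simpa using this
      have hlb : 0 ≤ Real.log b := Real.log_nonneg h2.le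
      have h4 : (1:ℝ) ≤ b * (1 + Real.log b) := by nlinarith
      rw [abs_of_nonpos (Real.log_nonpos ha.le h1), abs_of_nonneg hlb]
      linarith
  · have hb1 : (1:ℝ) ≤ b := h1.le.trans hab
    rw [abs_of_nonneg (Real.log_nonneg h1.le), abs_of_nonneg (Real.log_nonneg hb1)]
    have hlog : Real.log a ≤ Real.log b := Real.log_le_log ha hab
    have : 0 ≤ Real.log a := Real.log_nonneg h1.le
    nlinarith

/-- Near-boundary estimate (A.2): a bounded log-Lipschitz vector field whose normal
component vanishes at the projection point `p` on the zero set of `φ` satisfies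
`|∇φ(x)·v(x)| ≤ C φ(x)(1 - ln φ(x))`. -/
theorem near_boundary_estimate
    (K₁ L₁ L₂ A : ℝ) (hK₁ : 0 < K₁) (hL₁ : 0 < L₁) (hL₂ : 0 < L₂) (hA : 0 < A) :
    ∃ C > (0:ℝ),
      ∀ (φ : EuclideanSpace ℝ (Fin 2) → ℝ)
        (v : EuclideanSpace ℝ (Fin 2) → EuclideanSpace ℝ (Fin 2))
        (x p : EuclideanSpace ℝ (Fin 2)),
        (∀ y, DifferentiableAt ℝ φ y) →
        (∀ y, ‖fderiv ℝ φ y‖ ≤ L₁) →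
        (∀ y y', ‖fderiv ℝ φ y - fderiv ℝ φ y'‖ ≤ L₂ * ‖y - y'‖) →
        (∀ y, ‖v y‖ ≤ K₁) →
        (∀ y y', y ≠ y' →
          ‖v y - v y'‖ ≤ K₁ * ‖y - y'‖ * (1 + |Real.log ‖y - y'‖|)) →
        0 < φ x → φ x ≤ 1 / 2 →
        φ p = 0 → fderiv ℝ φ p (v p) = 0 →
        ‖x - p‖ ≤ A * φ x →
        |fderiv ℝ φ x (v x)| ≤ C * φ x * (1 - Real.log (φ x)) := by
  refine ⟨K₁ * A * (L₁ * (1 + |Real.log A|) + L₂), by positivity, ?_⟩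
  intro φ v x p hdiff hgradb hgradlip hvb hvlip hs hs2 hp hnp hxp
  have hxnep : x ≠ p := by
    intro h; rw [h, hp] at hs; exact lt_irrefl 0 hs
  set s := φ x with hs_def
  set r := ‖x - p‖ with hr_def
  have hr : 0 < r := norm_pos_iff.mpr (sub_ne_zero.mpr hxnep)
  have hls : Real.log s ≤ 0 := Real.log_nonpos hs.le (by linarith)
  -- decomposition
  have hdecomp : (fderiv ℝ φ x) (v x)
      = (fderiv ℝ φ x) (v x - v p) + ((fderiv ℝ φ x - fderiv ℝ φ p) (v p))
        + (fderiv ℝ φ p) (v p) := by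
    simp only [map_sub, ContinuousLinearMap.sub_apply]; ring
  -- bound on first term
  have hb1 : |(fderiv ℝ φ x) (v x - v p)| ≤ L₁ * (K₁ * r * (1 + |Real.log r|)) := by
    calc |(fderiv ℝ φ x) (v x - v p)| ≤ ‖fderiv ℝ φ x‖ * ‖v x - v p‖ := by
            rw [← Real.norm_eq_abs]; exact (fderiv ℝ φ x).le_opNorm _
      _ ≤ L₁ * (K₁ * r * (1 + |Real.log r|)) := by
            apply mul_le_mul (hgradb x) (hvlip x p hxnep) (norm_nonneg _) hL₁.le
  -- bound on second term
  have hb2 : |((fderiv ℝ φ x - fderiv ℝ φ p) (v p))| ≤ L₂ * r * K₁ := by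
    calc |((fderiv ℝ φ x - fderiv ℝ φ p) (v p))|
        ≤ ‖fderiv ℝ φ x - fderiv ℝ φ p‖ * ‖v p‖ := by
          rw [← Real.norm_eq_abs]; exact (fderiv ℝ φ x - fderiv ℝ φ p).le_opNorm _
      _ ≤ L₂ * r * K₁ := by
          apply mul_le_mul (hgradlip x p) (hvb p) (norm_nonneg _)
          positivity
  -- log estimate
  have hAs : 0 < A * s := mul_pos hA hs
  have key1 : r * (1 + |Real.log r|) ≤ (A * s) * (1 + |Real.log (A * s)|) :=
    fmono r (A * s) hr hxp
  have key2 : (A * s) * (1 + |Real.log (A * s)|)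
      ≤ A * (1 + |Real.log A|) * (s * (1 - Real.log s)) := by
    rw [Real.log_mul (ne_of_gt hA) (ne_of_gt hs)]
    have h1 : |Real.log A + Real.log s| ≤ |Real.log A| - Real.log s := by
      calc |Real.log A + Real.log s| ≤ |Real.log A| + |Real.log s| := abs_add_le _ _
        _ = |Real.log A| - Real.log s := by rw [abs_of_nonpos hls]; ring
    have h2 : (0:ℝ) ≤ |Real.log A| := abs_nonneg _
    nlinarith [hs.le, mul_nonneg h2 (neg_nonneg.mpr hls)]
  have hslog : s ≤ s * (1 - Real.log s) := by nlinarith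
  have hrs : r ≤ A * s := hxp
  -- combine
  calc |(fderiv ℝ φ x) (v x)|
      = |(fderiv ℝ φ x) (v x - v p) + ((fderiv ℝ φ x - fderiv ℝ φ p) (v p))
          + (fderiv ℝ φ p) (v p)| := by rw [← hdecomp]
    _ ≤ |(fderiv ℝ φ x) (v x - v p)| + |((fderiv ℝ φ x - fderiv ℝ φ p) (v p))|
          + |(fderiv ℝ φ p) (v p)| := abs_add_three _ _ _
    _ = |(fderiv ℝ φ x) (v x - v p)| + |((fderiv ℝ φ x - fderiv ℝ φ p) (v p))| + 0 := by
          rw [hnp, abs_zero]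
    _ ≤ L₁ * (K₁ * r * (1 + |Real.log r|)) + L₂ * r * K₁ + 0 := by
          gcongr
    _ ≤ K₁ * A * (L₁ * (1 + |Real.log A|) + L₂) * s * (1 - Real.log s) := by
          have hK : (0:ℝ) ≤ L₁ * K₁ := by positivity
          have e1 : L₁ * (K₁ * r * (1 + |Real.log r|))
              ≤ L₁ * K₁ * (A * (1 + |Real.log A|) * (s * (1 - Real.log s))) := by
            calc L₁ * (K₁ * r * (1 + |Real.log r|))
                = L₁ * K₁ * (r * (1 + |Real.log r|)) := by ring
              _ ≤ L₁ * K₁ * (A * (1 + |Real.log A|) * (s * (1 - Real.log s))) :=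
                  mul_le_mul_of_nonneg_left (key1.trans key2) hK
          have hrA : r ≤ A * (s * (1 - Real.log s)) := by
            calc r ≤ A * s := hrs
              _ ≤ A * (s * (1 - Real.log s)) := mul_le_mul_of_nonneg_left hslog hA.le
          have e2 : L₂ * r * K₁ ≤ L₂ * K₁ * (A * (s * (1 - Real.log s))) := by
            calc L₂ * r * K₁ = L₂ * K₁ * r := by ring
              _ ≤ L₂ * K₁ * (A * (s * (1 - Real.log s))) :=
                  mul_le_mul_of_nonneg_left hrA (by positivity)
          have : K₁ * A * (L₁ * (1 + |Real.log A|) + L₂) * s * (1 - Real.log s)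
              = L₁ * K₁ * (A * (1 + |Real.log A|) * (s * (1 - Real.log s)))
                + L₂ * K₁ * (A * (s * (1 - Real.log s))) := by ring
          linarith
end

section
/- For all K₁, L₁, L₂, L₃, A > 0, c₀ > 0 and α ≥ 0 there exists a constant C > 0, depending only on these parameters, with the following property. Let φ : ℝ² → ℝ be differentiable with ‖∇φ(y)‖ ≤ L₁ for all y ∈ ℝ² and ‖∇φ(y) − ∇φ(y')‖ ≤ L₂‖y − y'‖ for all y, y' ∈ ℝ²; let c : ℝ² → ℝ be differentiable with c(y) ≥ c₀ and ‖∇c(y)‖ ≤ L₃ for all y ∈ ℝ²; define b(y) = c(y)·φ(y)^α on {y : φ(y) > 0}. Let v : ℝ² → ℝ² satisfy ‖v(y)‖ ≤ K₁ for all y, the log-Lipschitz estimate ‖v(y) − v(y')‖ ≤ K₁‖y − y'‖(1 + |ln‖y − y'‖|) for all y ≠ y', and v(q)·∇φ(q) = 0 for every q with φ(q) = 0. Let x ∈ ℝ² with 0 < φ(x) ≤ 1/2 and suppose there exists p ∈ ℝ² with φ(p) = 0 and ‖x − p‖ ≤ A·φ(x). Then |∇b(x)·v(x)|/b(x) ≤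 C·(1 − ln φ(x)). -/
lemma ent_le_one {t : ℝ} (ht : 0 < t) (ht1 : t ≤ 1) : t * (1 - Real.log t) ≤ 1 := by
  have h : Real.log t⁻¹ ≤ t⁻¹ - 1 := Real.log_le_sub_one_of_pos (by positivity)
  rw [Real.log_inv] at h
  have h2 := mul_le_mul_of_nonneg_left h ht.le
  have h3 : t * (t⁻¹ - 1) = 1 - t := by field_simp
  nlinarith

lemma mono_fun {r s : ℝ} (hr : 0 < r) (hrs : r ≤ s) :
    r * (1 + |Real.log r|) ≤ s * (1 + |Real.log s|) := by
  have hs : 0 < s := lt_of_lt_of_le hr hrs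
  rcases le_or_gt 1 r with h1 | h1
  · have hlr : 0 ≤ Real.log r := Real.log_nonneg h1
    have hls : Real.log r ≤ Real.log s := Real.log_le_log hr hrs
    rw [abs_of_nonneg hlr, abs_of_nonneg (le_trans hlr hls)]
    nlinarith
  · rcases le_or_gt 1 s with h2 | h2
    · have hlr : Real.log r ≤ 0 := Real.log_nonpos hr.le h1.le
      have hls : 0 ≤ Real.log s := Real.log_nonneg h2
      rw [abs_of_nonpos hlr, abs_of_nonneg hls]
      have := ent_le_one hr h1.le
      nlinarith
    · have hlr : Real.log r ≤ 0 := Real.log_nonpos hr.le (hrs.trans h2.le)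
      have hls : Real.log s ≤ 0 := Real.log_nonpos hs.le h2.le
      rw [abs_of_nonpos hlr, abs_of_nonpos hls]
      have h3 : Real.log (s / r) ≤ s / r - 1 := Real.log_le_sub_one_of_pos (by positivity)
      have h4 : r * Real.log (s / r) ≤ s - r := by
        have h5 := mul_le_mul_of_nonneg_left h3 hr.le
        have h6 : r * (s / r - 1) = s - r := by field_simp
        linarith
      rw [Real.log_div hs.ne' hr.ne'] at h4
      nlinarith [mul_nonneg (sub_nonneg.2 hrs) (neg_nonneg.2 hls)]

set_option maxHeartbeats 1000000 in
/-- Estimate (A.3): for `b = c φ^α`, a bounded log-Lipschitz vector field `v` tangent to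
the zero set of `φ` satisfies `|∇b(x)·v(x)|/b(x) ≤ C (1 - ln φ(x))` near that set. -/
theorem divergence_log_estimate
    (K₁ L₁ L₂ L₃ A c₀ α : ℝ)
    (hK₁ : 0 < K₁) (hL₁ : 0 < L₁) (hL₂ : 0 < L₂) (hL₃ : 0 < L₃) (hA : 0 < A)
    (hc₀ : 0 < c₀) (hα : 0 ≤ α) :
    ∃ C > (0:ℝ),
      ∀ (φ c : EuclideanSpace ℝ (Fin 2) → ℝ)
        (v : EuclideanSpace ℝ (Fin 2) → EuclideanSpace ℝ (Fin 2))
        (x p : EuclideanSpace ℝ (Fin 2)),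
        (∀ y, DifferentiableAt ℝ φ y) →
        (∀ y, ‖fderiv ℝ φ y‖ ≤ L₁) →
        (∀ y y', ‖fderiv ℝ φ y - fderiv ℝ φ y'‖ ≤ L₂ * ‖y - y'‖) →
        (∀ y, DifferentiableAt ℝ c y) →
        (∀ y, c₀ ≤ c y) →
        (∀ y, ‖fderiv ℝ c y‖ ≤ L₃) →
        (∀ y, ‖v y‖ ≤ K₁) →
        (∀ y y', y ≠ y' →
          ‖v y - v y'‖ ≤ K₁ * ‖y - y'‖ * (1 + |Real.log ‖y - y'‖|)) →
        (∀ q, φ q = 0 → fderiv ℝ φ q (v q) = 0) →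
        0 < φ x → φ x ≤ 1 / 2 →
        φ p = 0 → ‖x - p‖ ≤ A * φ x →
        |φ x ^ α * fderiv ℝ c x (v x)
            + α * c x * φ x ^ (α - 1) * fderiv ℝ φ x (v x)|
          / (c x * φ x ^ α)
          ≤ C * (1 - Real.log (φ x)) := by
  refine ⟨K₁ * L₃ / c₀ + α * K₁ * A * (L₂ + L₁ * (1 + |Real.log A|)), ?_, ?_⟩
  · have h1 : 0 < K₁ * L₃ / c₀ := by positivity
    have h2 : 0 ≤ α * K₁ * A * (L₂ + L₁ * (1 + |Real.log A|)) := by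
      have : 0 ≤ L₂ + L₁ * (1 + |Real.log A|) := by positivity
      have : 0 ≤ α * K₁ * A := by positivity
      nlinarith [abs_nonneg (Real.log A)]
    linarith
  intro φ c v x p hφd hφ1 hφLip hcd hclb hcgrad hv hvLip htang hφpos hφhalf hp0 hxpA
  set D := 1 - Real.log (φ x) with hDdef
  have hlogφ : Real.log (φ x) ≤ 0 := Real.log_nonpos hφpos.le (by linarith)
  have hD1 : 1 ≤ D := by simp [hDdef]; linarith
  have hcx : 0 < c x := lt_of_lt_of_le hc₀ (hclb x)
  have hP : 0 < φ x ^ α := Real.rpow_pos_of_pos hφpos α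
  have hQ : 0 < φ x ^ (α - 1) := Real.rpow_pos_of_pos hφpos (α - 1)
  have hQφ : φ x ^ (α - 1) * φ x = φ x ^ α := by
    rw [← Real.rpow_add_one hφpos.ne']
    norm_num
  -- bound on the c-term
  have hX : |fderiv ℝ c x (v x)| ≤ K₁ * L₃ := by
    calc |fderiv ℝ c x (v x)| = ‖fderiv ℝ c x (v x)‖ := (Real.norm_eq_abs _).symm
      _ ≤ ‖fderiv ℝ c x‖ * ‖v x‖ := (fderiv ℝ c x).le_opNorm (v x)
      _ ≤ L₃ * K₁ := mul_le_mul (hcgrad x) (hv x) (norm_nonneg _) hL₃.le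
      _ = K₁ * L₃ := by ring
  -- x ≠ p
  have hxp : x ≠ p := by
    intro h; rw [h, hp0] at hφpos; exact lt_irrefl 0 hφpos
  have hr : 0 < ‖x - p‖ := by
    rw [norm_pos_iff, sub_ne_zero]; exact hxp
  -- key log bound
  have hw : 0 ≤ -Real.log (φ x) := by linarith
  have hkey : ‖x - p‖ * (1 + |Real.log ‖x - p‖|) ≤ A * (1 + |Real.log A|) * φ x * D := by
    have hm := mono_fun hr hxpA
    have habs : |Real.log (A * φ x)| ≤ |Real.log A| - Real.log (φ x) := by
      rw [Real.log_mul hA.ne' hφpos.ne']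
      calc |Real.log A + Real.log (φ x)| ≤ |Real.log A| + |Real.log (φ x)| := abs_add_le _ _
        _ = |Real.log A| - Real.log (φ x) := by rw [abs_of_nonpos hlogφ]; ring
    have h2 : (A * φ x) * (1 + |Real.log (A * φ x)|) ≤
        (A * φ x) * (1 + |Real.log A| - Real.log (φ x)) := by
      apply mul_le_mul_of_nonneg_left _ (by positivity)
      linarith
    have h3 : (A * φ x) * (1 + |Real.log A| - Real.log (φ x)) ≤
        A * (1 + |Real.log A|) * φ x * D := by
      have hprod : 0 ≤ (A * φ x) * (|Real.log A| * (-Real.log (φ x))) := by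
        apply mul_nonneg (by positivity) (mul_nonneg (abs_nonneg _) hw)
      simp only [hDdef]
      nlinarith
    linarith
  -- decomposition of the φ-term
  have hdecomp : fderiv ℝ φ x (v x) =
      (fderiv ℝ φ x - fderiv ℝ φ p) (v x) + fderiv ℝ φ p (v x - v p)
        + fderiv ℝ φ p (v p) := by
    simp [ContinuousLinearMap.sub_apply, map_sub]
  have hT1 : |(fderiv ℝ φ x - fderiv ℝ φ p) (v x)| ≤ L₂ * ‖x - p‖ * K₁ := by
    calc |(fderiv ℝ φ x - fderiv ℝ φ p) (v x)|
        = ‖(fderiv ℝ φ x - fderiv ℝ φ p) (v x)‖ := (Real.norm_eq_abs _).symm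
      _ ≤ ‖fderiv ℝ φ x - fderiv ℝ φ p‖ * ‖v x‖ :=
          (fderiv ℝ φ x - fderiv ℝ φ p).le_opNorm (v x)
      _ ≤ (L₂ * ‖x - p‖) * K₁ :=
          mul_le_mul (hφLip x p) (hv x) (norm_nonneg _) (by positivity)
  have hT2 : |fderiv ℝ φ p (v x - v p)| ≤
      L₁ * (K₁ * ‖x - p‖ * (1 + |Real.log ‖x - p‖|)) := by
    calc |fderiv ℝ φ p (v x - v p)| = ‖fderiv ℝ φ p (v x - v p)‖ := (Real.norm_eq_abs _).symm
      _ ≤ ‖fderiv ℝ φ p‖ * ‖v x - v p‖ := (fderiv ℝ φ p).le_opNorm _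
      _ ≤ L₁ * (K₁ * ‖x - p‖ * (1 + |Real.log ‖x - p‖|)) :=
          mul_le_mul (hφ1 p) (hvLip x p hxp) (norm_nonneg _) hL₁.le
  have hY : |fderiv ℝ φ x (v x)| ≤
      φ x * (K₁ * L₂ * A + K₁ * L₁ * A * (1 + |Real.log A|) * D) := by
    rw [hdecomp, htang p hp0, add_zero]
    calc |(fderiv ℝ φ x - fderiv ℝ φ p) (v x) + fderiv ℝ φ p (v x - v p)|
        ≤ |(fderiv ℝ φ x - fderiv ℝ φ p) (v x)| + |fderiv ℝ φ p (v x - v p)| := abs_add_le _ _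
      _ ≤ L₂ * ‖x - p‖ * K₁ + L₁ * (K₁ * ‖x - p‖ * (1 + |Real.log ‖x - p‖|)) :=
          add_le_add hT1 hT2
      _ ≤ φ x * (K₁ * L₂ * A + K₁ * L₁ * A * (1 + |Real.log A|) * D) := by
          have h2 := mul_le_mul_of_nonneg_left hxpA (mul_pos hL₂ hK₁).le
          have h3 := mul_le_mul_of_nonneg_left hkey (mul_pos hL₁ hK₁).le
          nlinarith
  -- put everything together
  rw [div_le_iff₀ (by positivity)]
  have habs : |φ x ^ α * fderiv ℝ c x (v x)
        + α * c x * φ x ^ (α - 1) * fderiv ℝ φ x (v x)| ≤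
      φ x ^ α * |fderiv ℝ c x (v x)|
        + (α * c x * φ x ^ (α - 1)) * |fderiv ℝ φ x (v x)| := by
    calc |φ x ^ α * fderiv ℝ c x (v x) + α * c x * φ x ^ (α - 1) * fderiv ℝ φ x (v x)|
        ≤ |φ x ^ α * fderiv ℝ c x (v x)| + |α * c x * φ x ^ (α - 1) * fderiv ℝ φ x (v x)| :=
          abs_add_le _ _
      _ = φ x ^ α * |fderiv ℝ c x (v x)|
          + (α * c x * φ x ^ (α - 1)) * |fderiv ℝ φ x (v x)| := by
          rw [abs_mul, abs_mul, abs_of_nonneg hP.le, abs_of_nonneg (by positivity : (0:ℝ) ≤ α * c x * φ x ^ (α - 1))]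
  have step1 : φ x ^ α * |fderiv ℝ c x (v x)| ≤ (K₁ * L₃ / c₀) * (c x * φ x ^ α) * D := by
    have h1 : |fderiv ℝ c x (v x)| ≤ (K₁ * L₃ / c₀) * c x := by
      have he : K₁ * L₃ = (K₁ * L₃ / c₀) * c₀ := by field_simp
      calc |fderiv ℝ c x (v x)| ≤ K₁ * L₃ := hX
        _ = (K₁ * L₃ / c₀) * c₀ := he
        _ ≤ (K₁ * L₃ / c₀) * c x := mul_le_mul_of_nonneg_left (hclb x) (by positivity)
    calc φ x ^ α * |fderiv ℝ c x (v x)| ≤ φ x ^ α * ((K₁ * L₃ / c₀) * c x) :=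
          mul_le_mul_of_nonneg_left h1 hP.le
      _ = (K₁ * L₃ / c₀) * (c x * φ x ^ α) := by ring
      _ ≤ (K₁ * L₃ / c₀) * (c x * φ x ^ α) * D :=
          le_mul_of_one_le_right (by positivity) hD1
  have step2 : (α * c x * φ x ^ (α - 1)) * |fderiv ℝ φ x (v x)| ≤
      (α * K₁ * A * (L₂ + L₁ * (1 + |Real.log A|))) * (c x * φ x ^ α) * D := by
    have hnn : 0 ≤ α * c x * φ x ^ (α - 1) := by positivity
    calc (α * c x * φ x ^ (α - 1)) * |fderiv ℝ φ x (v x)|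
        ≤ (α * c x * φ x ^ (α - 1)) *
            (φ x * (K₁ * L₂ * A + K₁ * L₁ * A * (1 + |Real.log A|) * D)) :=
          mul_le_mul_of_nonneg_left hY hnn
      _ = (α * c x * (φ x ^ (α - 1) * φ x)) *
            (K₁ * L₂ * A + K₁ * L₁ * A * (1 + |Real.log A|) * D) := by ring
      _ = (α * c x * φ x ^ α) *
            (K₁ * L₂ * A + K₁ * L₁ * A * (1 + |Real.log A|) * D) := by rw [hQφ]
      _ ≤ (α * c x * φ x ^ α) *
            ((K₁ * L₂ * A + K₁ * L₁ * A * (1 + |Real.log A|)) * D) := by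
          apply mul_le_mul_of_nonneg_left _ (by positivity)
          nlinarith [abs_nonneg (Real.log A), mul_pos (mul_pos hK₁ hL₂) hA]
      _ = (α * K₁ * A * (L₂ + L₁ * (1 + |Real.log A|))) * (c x * φ x ^ α) * D := by ring
  calc |φ x ^ α * fderiv ℝ c x (v x) + α * c x * φ x ^ (α - 1) * fderiv ℝ φ x (v x)|
      ≤ φ x ^ α * |fderiv ℝ c x (v x)|
        + (α * c x * φ x ^ (α - 1)) * |fderiv ℝ φ x (v x)| := habs
    _ ≤ (K₁ * L₃ / c₀) * (c x * φ x ^ α) * D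
        + (α * K₁ * A * (L₂ + L₁ * (1 + |Real.log A|))) * (c x * φ x ^ α) * D :=
          add_le_add step1 step2
    _ = (K₁ * L₃ / c₀ + α * K₁ * A * (L₂ + L₁ * (1 + |Real.log A|))) * D * (c x * φ x ^ α) := by
          ring
end
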